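/- Let A be an n×n negative definite real matrix and B an m×m negative definite real matrix, let D (n×n) and E (m×m) be diagonal real matrices with strictly positive diagonal entries, let κ_α ≥ 0, κ_β ≥ 0 be real constants, and let c_x > 0, c_y > 0. Define 𝒜_x = c_x · ( I_m ⊗ (D·(A + κ_α·Aᵀ)) ) and 𝒜_y = c_y · ( (E·(B + κ_β·Bᵀ)) ⊗ I_n ). Then: (i) 𝒜_x·𝒜_y = 𝒜_y·𝒜_x; (ii) I − 𝒜_x and I − 𝒜_y are invertible; and (iii) every eigenvalue μ ∈ ℂ of (I − 𝒜_y)⁻¹·(I − 𝒜_x)⁻¹·(I + 𝒜_x)·(I + 𝒜_y), regarded as a complex matrix, satisfies |μ| < 1, i.e., its spectral radius is strictly less than 1. (This is the unconditional stability of the two-dimensional alternating-direction Crank–Nicolson WSLD scheme.) -/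

import Mathlib

/-!
Weight the coordinates by `w = e⁻¹ ⊗ d⁻¹`. Then `diag(w) 𝒜_x = c_x (diag(e⁻¹) ⊗ (A + κ_α Aᵀ))`
and `diag(w) 𝒜_y = c_y ((B + κ_β Bᵀ) ⊗ diag(d⁻¹))` are negative definite, so in the weighted norm
`‖u‖_w² = ∑ wᵢ |uᵢ|²` each `𝒜` satisfies `‖(I + 𝒜) u‖_w < ‖(I - 𝒜) u‖_w` for `u ≠ 0`: the
squares differ by `4 Re ⟨u, diag(w) 𝒜 u⟩`. If `T v = μ v` for the iteration matrix `T`, then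
`(I + 𝒜_x)(I + 𝒜_y) v = μ (I - 𝒜_x)(I - 𝒜_y) v`, and with `z = (I - 𝒜_x) v` and the commutation
of `𝒜_x` and `𝒜_y`,
`|μ| ‖(I - 𝒜_y) z‖_w = ‖(I + 𝒜_x)(I + 𝒜_y) v‖_w ≤ ‖(I - 𝒜_x)(I + 𝒜_y) v‖_w`
`= ‖(I + 𝒜_y) z‖_w < ‖(I - 𝒜_y) z‖_w`.
-/

open Matrix
open scoped Kronecker

def NegDef {n : ℕ} (M : Matrix (Fin n) (Fin n) ℝ) : Prop :=
  ∀ x : Fin n → ℝ, x ≠ 0 → x ⬝ᵥ M.mulVec x < 0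

def IsNegDef {ι : Type*} [Fintype ι] (M : Matrix ι ι ℝ) : Prop :=
  ∀ x : ι → ℝ, x ≠ 0 → x ⬝ᵥ M *ᵥ x < 0

namespace Matrix

section Kronecker

variable {R ι κ : Type*} [CommSemiring R] [Fintype ι] [Fintype κ]

theorem dotProduct_diagonal_kronecker_mulVec [DecidableEq ι] (a : ι → R)
    (M : Matrix κ κ R) (x : ι × κ → R) :
    x ⬝ᵥ (diagonal a ⊗ₖ M) *ᵥ x =
      ∑ i, a i * (Function.curry x i ⬝ᵥ M *ᵥ Function.curry x i) := by
  simp only [dotProduct, mulVec, kroneckerMap_apply, diagonal_apply, Fintype.sum_prod_type,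
    ite_mul, zero_mul, Finset.sum_ite_irrel, Finset.sum_const_zero, Finset.sum_ite_eq,
    Finset.mem_univ, if_true, Finset.mul_sum, Function.curry_apply]
  refine Finset.sum_congr rfl fun i _ => Finset.sum_congr rfl fun j _ =>
    Finset.sum_congr rfl fun k _ => ?_
  ring

theorem dotProduct_kronecker_diagonal_mulVec [DecidableEq κ] (M : Matrix ι ι R)
    (a : κ → R) (x : ι × κ → R) :
    x ⬝ᵥ (M ⊗ₖ diagonal a) *ᵥ x =
      ∑ j, a j * ((fun i => x (i, j)) ⬝ᵥ M *ᵥ fun i => x (i, j)) := by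
  simp only [dotProduct, mulVec, kroneckerMap_apply, diagonal_apply, Fintype.sum_prod_type,
    mul_ite, mul_zero, ite_mul, zero_mul, Finset.sum_ite_eq, Finset.mem_univ, if_true,
    Finset.mul_sum]
  rw [Finset.sum_comm]
  refine Finset.sum_congr rfl fun i _ => Finset.sum_congr rfl fun j _ =>
    Finset.sum_congr rfl fun k _ => ?_
  ring

theorem commute_one_kronecker_kronecker_one [DecidableEq ι] [DecidableEq κ]
    (P : Matrix κ κ R) (Q : Matrix ι ι R) :
    Commute ((1 : Matrix ι ι R) ⊗ₖ P) (Q ⊗ₖ (1 : Matrix κ κ R)) := by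
  rw [Commute, SemiconjBy, ← mul_kronecker_mul, ← mul_kronecker_mul, one_mul,
    mul_one, one_mul, mul_one]

end Kronecker

theorem diagonal_inv_mul_diagonal_mul {K ι κ : Type*} [Field K] [Fintype ι] [DecidableEq ι]
    {d : ι → K} (hd : ∀ i, d i ≠ 0) (M : Matrix ι κ K) :
    diagonal d⁻¹ * (diagonal d * M) = M := by
  rw [← Matrix.mul_assoc, diagonal_mul_diagonal]
  simp [inv_mul_cancel₀ (hd _)]

section Complexification

variable {ι : Type*} [Fintype ι]

theorem re_star_dotProduct_map_ofReal_mulVec (M : Matrix ι ι ℝ) (u : ι → ℂ) :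
    (star u ⬝ᵥ M.map Complex.ofReal *ᵥ u).re =
      (fun i => (u i).re) ⬝ᵥ M *ᵥ (fun i => (u i).re) +
        (fun i => (u i).im) ⬝ᵥ M *ᵥ (fun i => (u i).im) := by
  simp only [mulVec, dotProduct, map_apply, Pi.star_apply, Complex.re_sum, Finset.mul_sum,
    ← Finset.sum_add_distrib]
  refine Finset.sum_congr rfl fun i _ => Finset.sum_congr rfl fun j _ => ?_
  simp only [Complex.mul_re, Complex.star_def, Complex.conj_re, Complex.conj_im,
    Complex.ofReal_re, Complex.ofReal_im, Complex.mul_im]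
  ring

theorem map_ofReal_mul (P Q : Matrix ι ι ℝ) :
    (P * Q).map Complex.ofReal = P.map Complex.ofReal * Q.map Complex.ofReal :=
  Matrix.map_mul (f := Complex.ofRealHom)

theorem map_ofReal_mulVec_mulVec_comm {P Q : Matrix ι ι ℝ} (h : Commute P Q) (v : ι → ℂ) :
    P.map Complex.ofReal *ᵥ (Q.map Complex.ofReal *ᵥ v) =
      Q.map Complex.ofReal *ᵥ (P.map Complex.ofReal *ᵥ v) := by
  rw [mulVec_mulVec, mulVec_mulVec, ← map_ofReal_mul, ← map_ofReal_mul, h.eq]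

variable [DecidableEq ι]

theorem map_ofReal_one_add_mulVec (M : Matrix ι ι ℝ) (u : ι → ℂ) :
    (1 + M).map Complex.ofReal *ᵥ u = u + M.map Complex.ofReal *ᵥ u := by
  rw [Matrix.map_add _ Complex.ofReal_add,
    Matrix.map_one _ Complex.ofReal_zero Complex.ofReal_one, add_mulVec, one_mulVec]

theorem map_ofReal_one_sub_mulVec (M : Matrix ι ι ℝ) (u : ι → ℂ) :
    (1 - M).map Complex.ofReal *ᵥ u = u - M.map Complex.ofReal *ᵥ u := by
  rw [Matrix.map_sub _ Complex.ofReal_sub,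
    Matrix.map_one _ Complex.ofReal_zero Complex.ofReal_one, sub_mulVec, one_mulVec]

theorem map_ofReal_diagonal_mul_mulVec (w : ι → ℝ) (M : Matrix ι ι ℝ) (u : ι → ℂ) :
    (diagonal w * M).map Complex.ofReal *ᵥ u =
      fun i => (w i : ℂ) * (M.map Complex.ofReal *ᵥ u) i := by
  rw [map_ofReal_mul, ← mulVec_mulVec, diagonal_map Complex.ofReal_zero]
  funext i
  simp [mulVec_diagonal]

end Complexification

theorem exists_mulVec_eq_smul_of_mem_spectrum {K ι : Type*} [Field K] [Fintype ι]
    [DecidableEq ι] {A : Matrix ι ι K} {μ : K} (hμ : μ ∈ spectrum K A) :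
    ∃ v ≠ 0, A *ᵥ v = μ • v := by
  rw [← spectrum_toLin', ← Module.End.hasEigenvalue_iff_mem_spectrum] at hμ
  obtain ⟨v, hv⟩ := hμ.exists_hasEigenvector
  exact ⟨v, hv.2, by simpa using hv.apply_eq_smul⟩

end Matrix

theorem NegDef.isNegDef {n : ℕ} {M : Matrix (Fin n) (Fin n) ℝ} (hM : NegDef M) : IsNegDef M :=
  hM

namespace IsNegDef

variable {ι κ : Type*} [Fintype ι] [Fintype κ] {M : Matrix ι ι ℝ}

theorem dotProduct_mulVec_nonpos (hM : IsNegDef M) (x : ι → ℝ) : x ⬝ᵥ M *ᵥ x ≤ 0 := by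
  rcases eq_or_ne x 0 with rfl | hx
  · simp
  · exact (hM x hx).le

theorem smul (hM : IsNegDef M) {c : ℝ} (hc : 0 < c) : IsNegDef (c • M) := fun x hx => by
  rw [smul_mulVec, dotProduct_smul, smul_eq_mul]
  exact mul_neg_of_pos_of_neg hc (hM x hx)

theorem add_smul_transpose (hM : IsNegDef M) {t : ℝ} (ht : 0 ≤ t) : IsNegDef (M + t • Mᵀ) :=
  fun x hx => by
    have htranspose : x ⬝ᵥ Mᵀ *ᵥ x = x ⬝ᵥ M *ᵥ x := by
      rw [dotProduct_mulVec, vecMul_transpose, dotProduct_comm]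
    rw [add_mulVec, dotProduct_add, smul_mulVec, dotProduct_smul, htranspose, smul_eq_mul]
    nlinarith [hM x hx]

theorem sum_mul_dotProduct_mulVec_neg (hM : IsNegDef M) {a : κ → ℝ} (ha : ∀ j, 0 < a j)
    {y : κ → ι → ℝ} (hy : y ≠ 0) : ∑ j, a j * (y j ⬝ᵥ M *ᵥ y j) < 0 := by
  obtain ⟨j, hj⟩ := Function.ne_iff.mp hy
  exact Finset.sum_neg'
    (fun k _ => mul_nonpos_of_nonneg_of_nonpos (ha k).le (hM.dotProduct_mulVec_nonpos _))
    ⟨j, Finset.mem_univ _, mul_neg_of_pos_of_neg (ha j) (hM _ hj)⟩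

theorem diagonal_kronecker [DecidableEq κ] (hM : IsNegDef M) {a : κ → ℝ} (ha : ∀ j, 0 < a j) :
    IsNegDef (diagonal a ⊗ₖ M) := fun x hx => by
  rw [dotProduct_diagonal_kronecker_mulVec]
  exact hM.sum_mul_dotProduct_mulVec_neg ha fun h => hx (Function.curry_injective h)

theorem kronecker_diagonal [DecidableEq κ] (hM : IsNegDef M) {a : κ → ℝ} (ha : ∀ j, 0 < a j) :
    IsNegDef (M ⊗ₖ diagonal a) := fun x hx => by
  rw [dotProduct_kronecker_diagonal_mulVec]
  refine hM.sum_mul_dotProduct_mulVec_neg ha fun h => hx (funext fun p => ?_)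
  exact congrFun (congrFun h p.2) p.1

theorem re_star_dotProduct_map_ofReal_mulVec_neg (hM : IsNegDef M) {u : ι → ℂ} (hu : u ≠ 0) :
    (star u ⬝ᵥ M.map Complex.ofReal *ᵥ u).re < 0 := by
  have hparts : (fun i => (u i).re) ≠ 0 ∨ (fun i => (u i).im) ≠ 0 := by
    by_contra! h
    exact hu (funext fun i => Complex.ext (congrFun h.1 i) (congrFun h.2 i))
  rw [re_star_dotProduct_map_ofReal_mulVec]
  rcases hparts with h | h
  · linarith [hM _ h, hM.dotProduct_mulVec_nonpos fun i => (u i).im]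
  · linarith [hM _ h, hM.dotProduct_mulVec_nonpos fun i => (u i).re]

end IsNegDef

section WeightedNorm

variable {ι : Type*} [Fintype ι]

def weightedNormSq (w : ι → ℝ) (u : ι → ℂ) : ℝ := ∑ i, w i * Complex.normSq (u i)

theorem weightedNormSq_nonneg {w : ι → ℝ} (hw : ∀ i, 0 ≤ w i) (u : ι → ℂ) :
    0 ≤ weightedNormSq w u :=
  Finset.sum_nonneg fun i _ => mul_nonneg (hw i) (Complex.normSq_nonneg _)

theorem weightedNormSq_pos {w : ι → ℝ} (hw : ∀ i, 0 < w i) {u : ι → ℂ} (hu : u ≠ 0) :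
    0 < weightedNormSq w u := by
  obtain ⟨i, hi⟩ := Function.ne_iff.mp hu
  exact Finset.sum_pos' (fun j _ => mul_nonneg (hw j).le (Complex.normSq_nonneg _))
    ⟨i, Finset.mem_univ _, mul_pos (hw i) (Complex.normSq_pos.mpr hi)⟩

@[simp]
theorem weightedNormSq_zero (w : ι → ℝ) : weightedNormSq w 0 = 0 := by
  simp [weightedNormSq]

theorem weightedNormSq_smul (w : ι → ℝ) (c : ℂ) (u : ι → ℂ) :
    weightedNormSq w (c • u) = Complex.normSq c * weightedNormSq w u := by
  simp only [weightedNormSq, Pi.smul_apply, smul_eq_mul, Complex.normSq_mul, Finset.mul_sum]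
  exact Finset.sum_congr rfl fun i _ => by ring

theorem weightedNormSq_add_eq_sub_add (w : ι → ℝ) (u g : ι → ℂ) :
    weightedNormSq w (u + g) =
      weightedNormSq w (u - g) + 4 * (star u ⬝ᵥ fun i => (w i : ℂ) * g i).re := by
  simp only [weightedNormSq, dotProduct, Complex.re_sum, Finset.mul_sum,
    ← Finset.sum_add_distrib]
  refine Finset.sum_congr rfl fun i _ => ?_
  simp only [Pi.add_apply, Pi.sub_apply, Pi.star_apply, Complex.normSq_apply, Complex.mul_re,
    Complex.mul_im, Complex.add_re, Complex.add_im, Complex.sub_re, Complex.sub_im,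
    Complex.star_def, Complex.conj_re, Complex.conj_im, Complex.ofReal_re, Complex.ofReal_im]
  ring

variable [DecidableEq ι]

theorem weightedNormSq_map_ofReal_one_add_mulVec (w : ι → ℝ) (M : Matrix ι ι ℝ) (u : ι → ℂ) :
    weightedNormSq w ((1 + M).map Complex.ofReal *ᵥ u) =
      weightedNormSq w ((1 - M).map Complex.ofReal *ᵥ u) +
        4 * (star u ⬝ᵥ (diagonal w * M).map Complex.ofReal *ᵥ u).re := by
  rw [map_ofReal_one_add_mulVec, map_ofReal_one_sub_mulVec, map_ofReal_diagonal_mul_mulVec,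
    weightedNormSq_add_eq_sub_add]

variable {w : ι → ℝ} {M : Matrix ι ι ℝ}

theorem weightedNormSq_map_ofReal_one_add_mulVec_lt (hWM : IsNegDef (diagonal w * M))
    {u : ι → ℂ} (hu : u ≠ 0) :
    weightedNormSq w ((1 + M).map Complex.ofReal *ᵥ u) <
      weightedNormSq w ((1 - M).map Complex.ofReal *ᵥ u) := by
  rw [weightedNormSq_map_ofReal_one_add_mulVec]
  linarith [hWM.re_star_dotProduct_map_ofReal_mulVec_neg hu]

theorem weightedNormSq_map_ofReal_one_add_mulVec_le (hWM : IsNegDef (diagonal w * M))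
    (u : ι → ℂ) :
    weightedNormSq w ((1 + M).map Complex.ofReal *ᵥ u) ≤
      weightedNormSq w ((1 - M).map Complex.ofReal *ᵥ u) := by
  rcases eq_or_ne u 0 with rfl | hu
  · simp
  · exact (weightedNormSq_map_ofReal_one_add_mulVec_lt hWM hu).le

theorem map_ofReal_one_sub_mulVec_ne_zero (hw : ∀ i, 0 ≤ w i)
    (hWM : IsNegDef (diagonal w * M)) {u : ι → ℂ} (hu : u ≠ 0) :
    (1 - M).map Complex.ofReal *ᵥ u ≠ 0 := by
  intro h
  have := weightedNormSq_map_ofReal_one_add_mulVec_lt hWM hu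
  rw [h, weightedNormSq_zero] at this
  linarith [weightedNormSq_nonneg hw ((1 + M).map Complex.ofReal *ᵥ u)]

end WeightedNorm

theorem isUnit_one_sub_of_isNegDef_diagonal_mul {ι : Type*} [Fintype ι] [DecidableEq ι]
    {w : ι → ℝ} {M : Matrix ι ι ℝ} (hw : ∀ i, 0 ≤ w i) (hWM : IsNegDef (diagonal w * M)) :
    IsUnit (1 - M) := by
  rw [isUnit_iff_isUnit_det, isUnit_iff_ne_zero]
  intro hdet
  obtain ⟨v, hv, hMv⟩ := exists_mulVec_eq_zero_iff.mpr hdet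
  rw [sub_mulVec, one_mulVec, sub_eq_zero] at hMv
  have hform : v ⬝ᵥ (diagonal w * M) *ᵥ v = ∑ i, w i * v i ^ 2 := by
    rw [← mulVec_mulVec, ← hMv]
    simp only [dotProduct, mulVec_diagonal]
    exact Finset.sum_congr rfl fun i _ => by ring
  have := hWM v hv
  rw [hform] at this
  linarith [Finset.sum_nonneg fun i (_ : i ∈ Finset.univ) => mul_nonneg (hw i) (sq_nonneg (v i))]

open scoped ENNReal in
theorem spectralRadius_lt_of_finite {𝕜 A : Type*} [NormedField 𝕜] [Ring A] [Algebra 𝕜 A]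
    {a : A} {r : ℝ≥0∞} (hfin : (spectrum 𝕜 a).Finite) (hr : 0 < r)
    (h : ∀ μ ∈ spectrum 𝕜 a, (‖μ‖₊ : ℝ≥0∞) < r) : spectralRadius 𝕜 a < r := by
  rw [spectralRadius, ← sSup_image]
  rcases (spectrum 𝕜 a).eq_empty_or_nonempty with hempty | hne
  · simpa [hempty] using hr
  · exact ((hfin.image _).csSup_lt_iff (hne.image _)).2 (by simpa using h)

section ADI

variable {ι : Type*} [Fintype ι] [DecidableEq ι]

noncomputable def adiIterationMatrix (X Y : Matrix ι ι ℝ) : Matrix ι ι ℝ :=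
  (1 - Y)⁻¹ * (1 - X)⁻¹ * (1 + X) * (1 + Y)

theorem one_sub_mul_one_sub_mul_adiIterationMatrix {X Y : Matrix ι ι ℝ} (hX : IsUnit (1 - X))
    (hY : IsUnit (1 - Y)) :
    (1 - X) * (1 - Y) * adiIterationMatrix X Y = (1 + X) * (1 + Y) := by
  rw [isUnit_iff_isUnit_det] at hX hY
  simp only [adiIterationMatrix, Matrix.mul_assoc, mul_nonsing_inv_cancel_left _ _ hX,
    mul_nonsing_inv_cancel_left _ _ hY]

theorem norm_lt_one_of_mem_spectrum_adiIterationMatrix {w : ι → ℝ} (hw : ∀ i, 0 < w i)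
    {X Y : Matrix ι ι ℝ} (hXY : Commute X Y) (hX : IsNegDef (diagonal w * X))
    (hY : IsNegDef (diagonal w * Y)) {μ : ℂ}
    (hμ : μ ∈ spectrum ℂ ((adiIterationMatrix X Y).map Complex.ofReal)) : ‖μ‖ < 1 := by
  have hw₀ : ∀ i, 0 ≤ w i := fun i => (hw i).le
  obtain ⟨v, hv, hTv⟩ := exists_mulVec_eq_smul_of_mem_spectrum hμ
  set z := (1 - X).map Complex.ofReal *ᵥ v
  have hz : z ≠ 0 := map_ofReal_one_sub_mulVec_ne_zero hw₀ hX hv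
  have heig : (1 + X).map Complex.ofReal *ᵥ ((1 + Y).map Complex.ofReal *ᵥ v) =
      μ • (1 - Y).map Complex.ofReal *ᵥ z := by
    have := congrArg (fun P => P.map Complex.ofReal *ᵥ v)
      (one_sub_mul_one_sub_mul_adiIterationMatrix (isUnit_one_sub_of_isNegDef_diagonal_mul hw₀ hX)
        (isUnit_one_sub_of_isNegDef_diagonal_mul hw₀ hY))
    simp only [map_ofReal_mul, ← mulVec_mulVec, hTv, mulVec_smul] at this
    rw [← this, map_ofReal_mulVec_mulVec_comm
      ((Commute.one_left _).sub_left ((Commute.one_right _).sub_right hXY))]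
  have hswap : (1 - X).map Complex.ofReal *ᵥ ((1 + Y).map Complex.ofReal *ᵥ v) =
      (1 + Y).map Complex.ofReal *ᵥ z :=
    map_ofReal_mulVec_mulVec_comm
      ((Commute.one_left _).sub_left ((Commute.one_right _).add_right hXY)) v
  have hcontract : Complex.normSq μ * weightedNormSq w ((1 - Y).map Complex.ofReal *ᵥ z) <
      weightedNormSq w ((1 - Y).map Complex.ofReal *ᵥ z) :=
    calc Complex.normSq μ * weightedNormSq w ((1 - Y).map Complex.ofReal *ᵥ z)
        = weightedNormSq w ((1 + X).map Complex.ofReal *ᵥ ((1 + Y).map Complex.ofReal *ᵥ v)) := by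
          rw [heig, weightedNormSq_smul]
      _ ≤ weightedNormSq w ((1 - X).map Complex.ofReal *ᵥ ((1 + Y).map Complex.ofReal *ᵥ v)) :=
          weightedNormSq_map_ofReal_one_add_mulVec_le hX _
      _ = weightedNormSq w ((1 + Y).map Complex.ofReal *ᵥ z) := by rw [hswap]
      _ < weightedNormSq w ((1 - Y).map Complex.ofReal *ᵥ z) :=
          weightedNormSq_map_ofReal_one_add_mulVec_lt hY hz
  have hpos := weightedNormSq_pos hw (map_ofReal_one_sub_mulVec_ne_zero hw₀ hY hz)
  rw [← sq_lt_one_iff₀ (norm_nonneg μ), ← Complex.normSq_eq_norm_sq]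
  nlinarith

end ADI

/-- Unconditional stability of the 2D alternating-direction Crank–Nicolson WSLD scheme:
with `𝒜_x = c_x (I ⊗ D(A + κ_α Aᵀ))` and `𝒜_y = c_y ((E(B + κ_β Bᵀ)) ⊗ I)`, the matrices
`𝒜_x` and `𝒜_y` commute, `I - 𝒜_x` and `I - 𝒜_y` are invertible, and every eigenvalue of
`(I - 𝒜_y)⁻¹ (I - 𝒜_x)⁻¹ (I + 𝒜_x)(I + 𝒜_y)` has modulus `< 1`, i.e., the spectral
radius is `< 1`. -/
theorem stmt19 {n m : ℕ}
    (A : Matrix (Fin n) (Fin n) ℝ) (hA : NegDef A)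
    (B : Matrix (Fin m) (Fin m) ℝ) (hB : NegDef B)
    (d : Fin n → ℝ) (hd : ∀ i, 0 < d i)
    (e : Fin m → ℝ) (he : ∀ j, 0 < e j)
    (κα κβ : ℝ) (hκα : 0 ≤ κα) (hκβ : 0 ≤ κβ)
    (cx cy : ℝ) (hcx : 0 < cx) (hcy : 0 < cy)
    (Ax Ay : Matrix (Fin m × Fin n) (Fin m × Fin n) ℝ)
    (hAx : Ax = cx • ((1 : Matrix (Fin m) (Fin m) ℝ) ⊗ₖ
      (Matrix.diagonal d * (A + κα • Aᵀ))))
    (hAy : Ay = cy • ((Matrix.diagonal e * (B + κβ • Bᵀ)) ⊗ₖ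
      (1 : Matrix (Fin n) (Fin n) ℝ))) :
    Ax * Ay = Ay * Ax ∧
    IsUnit (1 - Ax) ∧ IsUnit (1 - Ay) ∧
    (∀ μ ∈ spectrum ℂ
        (((1 - Ay)⁻¹ * (1 - Ax)⁻¹ * (1 + Ax) * (1 + Ay)).map Complex.ofReal),
      ‖μ‖ < 1) ∧
    spectralRadius ℂ
        (((1 - Ay)⁻¹ * (1 - Ax)⁻¹ * (1 + Ax) * (1 + Ay)).map Complex.ofReal) < 1 := by
  set w : Fin m × Fin n → ℝ := fun p => e⁻¹ p.1 * d⁻¹ p.2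
  have hw : ∀ p, 0 < w p := fun p => mul_pos (inv_pos.2 (he p.1)) (inv_pos.2 (hd p.2))
  have hWx : IsNegDef (diagonal w * Ax) := by
    rw [hAx, ← diagonal_kronecker_diagonal, mul_smul_comm, ← mul_kronecker_mul, Matrix.mul_one,
      diagonal_inv_mul_diagonal_mul fun i => (hd i).ne']
    exact ((hA.isNegDef.add_smul_transpose hκα).diagonal_kronecker
      fun j => inv_pos.2 (he j)).smul hcx
  have hWy : IsNegDef (diagonal w * Ay) := by
    rw [hAy, ← diagonal_kronecker_diagonal, mul_smul_comm, ← mul_kronecker_mul, Matrix.mul_one,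
      diagonal_inv_mul_diagonal_mul fun j => (he j).ne']
    exact ((hB.isNegDef.add_smul_transpose hκβ).kronecker_diagonal
      fun i => inv_pos.2 (hd i)).smul hcy
  have hcomm : Commute Ax Ay := by
    rw [hAx, hAy]
    exact ((commute_one_kronecker_kronecker_one _ _).smul_left cx).smul_right cy
  have hstable : ∀ μ ∈ spectrum ℂ ((adiIterationMatrix Ax Ay).map Complex.ofReal), ‖μ‖ < 1 :=
    fun _ => norm_lt_one_of_mem_spectrum_adiIterationMatrix hw hcomm hWx hWy
  refine ⟨hcomm.eq, isUnit_one_sub_of_isNegDef_diagonal_mul (fun p => (hw p).le) hWx,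
    isUnit_one_sub_of_isNegDef_diagonal_mul (fun p => (hw p).le) hWy, hstable,
    spectralRadius_lt_of_finite (finite_spectrum _) one_pos fun μ hμ => ?_⟩
  exact_mod_cast hstable μ hμ
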